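/- arXiv:2503.18220 — 3 statements merged into one kernel-verified Lean document; each statement's English description precedes it below -/
import Mathlib

section
/- Suppose the priority profile ≿_s satisfies PD, WO, and DC. Then for any subset J of students with |J| ≤ q_s − 1 and any three distinct students i, j, k not in J: if i ≻_s^{J∪{k}} j and j ≻_s^{J∪{i}} k, then i ≻_s^{J∪{j}} k. -/
open Finset

variable {I T S : Type*}

/-- `a` (a student or the null student `none`) is not a member of `J`. -/
def NotInOpt (a : Option I) (J : Finset I) : Prop := ∀ i ∈ a, i ∉ J

/-- Strict part `≻` of the weak priority order `ge = ≿`. -/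
def StrictP (ge : Finset I → Option I → Option I → Prop) (J : Finset I) (a b : Option I) :
    Prop :=
  ge J a b ∧ ¬ ge J b a

/-- Symmetric part `∼` of the weak priority order `ge = ≿`. -/
def SimP (ge : Finset I → Option I → Option I → Prop) (J : Finset I) (a b : Option I) :
    Prop :=
  ge J a b ∧ ge J b a

/-- `tcnt τ J a` = number of students in `J` of the same type as `a` (0 for the null student). -/
def tcnt [DecidableEq T] (τ : I → T) (J : Finset I) : Option I → ℕ
  | none => 0
  | some i => (J.filter fun x => τ x = τ i).card

/-- Completeness of each `≿ₛᴶ` on `(I∖J) ∪ {∅}`. -/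
def CompleteP (q : ℕ) (ge : Finset I → Option I → Option I → Prop) : Prop :=
  ∀ J : Finset I, J.card < q → ∀ a b : Option I, NotInOpt a J → NotInOpt b J →
    ge J a b ∨ ge J b a

/-- Transitivity of each `≿ₛᴶ` on `(I∖J) ∪ {∅}`. -/
def TransP (q : ℕ) (ge : Finset I → Option I → Option I → Prop) : Prop :=
  ∀ J : Finset I, J.card < q → ∀ a b c : Option I,
    NotInOpt a J → NotInOpt b J → NotInOpt c J → ge J a b → ge J b c → ge J a c

/-- Antisymmetry of each `≿ₛᴶ` (so that it is a linear order). -/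
def AntisymP (q : ℕ) (ge : Finset I → Option I → Option I → Prop) : Prop :=
  ∀ J : Finset I, J.card < q → ∀ a b : Option I, NotInOpt a J → NotInOpt b J →
    ge J a b → ge J b a → a = b

/-- PD (preference for diversity). -/
def PD [DecidableEq T] (τ : I → T) (q : ℕ)
    (ge : Finset I → Option I → Option I → Prop) : Prop :=
  ∀ J J' : Finset I, ∀ a b : Option I,
    J.card < q → J'.card < q →
    NotInOpt a J → NotInOpt b J → NotInOpt a J' → NotInOpt b J' →
    tcnt τ J' a ≤ tcnt τ J a → tcnt τ J b ≤ tcnt τ J' b →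
    (StrictP ge J a b → StrictP ge J' a b) ∧ (ge J a b → ge J' a b)

/-- WO (within-type ordering). -/
def WO [DecidableEq T] (τ : I → T) (q : ℕ)
    (ge : Finset I → Option I → Option I → Prop) : Prop :=
  ∀ J J' : Finset I, ∀ i j : I,
    J.card < q → J'.card < q →
    i ∉ J → j ∉ J → i ∉ J' → j ∉ J' → τ i = τ j →
    (StrictP ge J (some i) (some j) → StrictP ge J' (some i) (some j)) ∧
    (ge J (some i) (some j) → ge J' (some i) (some j))

/-- DC (distributional consistency of WO). -/
def DC [DecidableEq I] [DecidableEq T] (τ : I → T) (q : ℕ)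
    (ge : Finset I → Option I → Option I → Prop) : Prop :=
  ∀ J : Finset I, ∀ i j : I, ∀ k : Option I,
    J.card + 1 < q → i ≠ j → i ∉ J → j ∉ J → NotInOpt k J →
    k ≠ some i → k ≠ some j → τ i = τ j → ge J (some i) (some j) →
    (StrictP ge (insert i J) (some j) k → StrictP ge (insert j J) (some i) k) ∧
    (SimP ge (insert i J) (some j) k → SimP ge (insert j J) (some i) k) ∧
    (StrictP ge (insert i J) k (some j) → StrictP ge (insert j J) k (some i))

/-! If two of `i, j, k` share a type, WO moves a comparison between them freely between `J` and
`J ∪ {x}`, and DC, applied at `J` to that pair, swaps which of the two is added to `J`. If all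
three types differ, adding one of them to `J` leaves the type counts of the other two unchanged,
so PD moves both hypotheses down to `J`, where transitivity combines them, and back up to
`J ∪ {j}`. -/

lemma notInOpt_some {i : I} {S : Finset I} (h : i ∉ S) : NotInOpt (some i) S := by
  rintro _ ⟨⟩
  exact h

lemma tcnt_mono [DecidableEq T] (τ : I → T) {J J' : Finset I} (h : J ⊆ J') :
    ∀ a : Option I, tcnt τ J a ≤ tcnt τ J' a
  | none => le_rfl
  | some _ => card_le_card (filter_subset_filter _ h)

lemma tcnt_insert_of_ne [DecidableEq I] [DecidableEq T] (τ : I → T) {x i : I} (J : Finset I)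
    (h : τ x ≠ τ i) : tcnt τ (insert x J) (some i) = tcnt τ J (some i) := by
  simp [tcnt, filter_insert, h]

section Order

variable {q : ℕ} {ge : Finset I → Option I → Option I → Prop} {J : Finset I}
  {a b c : Option I}

lemma strictP_of_not_ge (hcomp : CompleteP q ge) (hJ : J.card < q)
    (ha : NotInOpt a J) (hb : NotInOpt b J) (h : ¬ ge J b a) : StrictP ge J a b :=
  ⟨(hcomp J hJ a b ha hb).resolve_right h, h⟩

lemma StrictP.trans (htr : TransP q ge) (hJ : J.card < q)
    (ha : NotInOpt a J) (hb : NotInOpt b J) (hc : NotInOpt c J)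
    (hab : StrictP ge J a b) (hbc : StrictP ge J b c) : StrictP ge J a c :=
  ⟨htr J hJ a b c ha hb hc hab.1 hbc.1,
    fun hca => hbc.2 (htr J hJ c a b hc ha hb hca hab.1)⟩

end Order

lemma DC.ge_insert_swap [DecidableEq I] [DecidableEq T] {τ : I → T} {q : ℕ}
    {ge : Finset I → Option I → Option I → Prop} (hDC : DC τ q ge) {J : Finset I} {i j : I}
    {k : Option I} (hJ : J.card + 1 < q) (hij : i ≠ j) (hi : i ∉ J) (hj : j ∉ J)
    (hk : NotInOpt k J) (hki : k ≠ some i) (hkj : k ≠ some j) (hτ : τ i = τ j)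
    (hge : ge J (some i) (some j)) (h : ge (insert i J) (some j) k) :
    ge (insert j J) (some i) k := by
  have dc := hDC J i j k hJ hij hi hj hk hki hkj hτ hge
  by_cases hkj' : ge (insert i J) k (some j)
  · exact (dc.2.1 ⟨h, hkj'⟩).1
  · exact (dc.1 ⟨h, hkj'⟩).1

section Cases

variable [DecidableEq I] [DecidableEq T] {τ : I → T} {q : ℕ}
  {ge : Finset I → Option I → Option I → Prop} {J : Finset I} {i j k : I}

lemma strictP_insert_of_type_eq_left (hWO : WO τ q ge) (hDC : DC τ q ge)
    (hJ : J.card + 1 < q) (hij : i ≠ j) (hik : i ≠ k) (hjk : j ≠ k)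
    (hi : i ∉ J) (hj : j ∉ J) (hk : k ∉ J) (hτ : τ i = τ j)
    (h1 : StrictP ge (insert k J) (some i) (some j))
    (h2 : StrictP ge (insert i J) (some j) (some k)) :
    StrictP ge (insert j J) (some i) (some k) := by
  have h1J : StrictP ge J (some i) (some j) :=
    (hWO _ J i j ((card_insert_le k J).trans_lt hJ) (by omega)
      (by simp [hik, hi]) (by simp [hjk, hj]) hi hj hτ).1 h1
  exact (hDC J i j (some k) hJ hij hi hj (notInOpt_some hk)
    (by simp [hik.symm]) (by simp [hjk.symm]) hτ h1J.1).1 h2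

lemma strictP_insert_of_type_eq_right (hcomp : CompleteP q ge) (hWO : WO τ q ge)
    (hDC : DC τ q ge) (hJ : J.card + 1 < q) (hij : i ≠ j) (hik : i ≠ k) (hjk : j ≠ k)
    (hi : i ∉ J) (hj : j ∉ J) (hk : k ∉ J) (hτ : τ j = τ k)
    (h1 : StrictP ge (insert k J) (some i) (some j))
    (h2 : StrictP ge (insert i J) (some j) (some k)) :
    StrictP ge (insert j J) (some i) (some k) := by
  have h2J : ge J (some j) (some k) :=
    (hWO _ J j k ((card_insert_le i J).trans_lt hJ) (by omega)
      (by simp [hij.symm, hj]) (by simp [hik.symm, hk]) hj hk hτ).2 h2.1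
  refine strictP_of_not_ge hcomp ((card_insert_le j J).trans_lt hJ)
    (notInOpt_some (by simp [hij, hi])) (notInOpt_some (by simp [hjk.symm, hk])) ?_
  intro hki
  exact h1.2 (hDC.ge_insert_swap hJ hjk hj hk (notInOpt_some hi)
    (by simp [hij]) (by simp [hik]) hτ h2J hki)

lemma strictP_insert_of_type_eq_outer (hcomp : CompleteP q ge) (hWO : WO τ q ge)
    (hDC : DC τ q ge) (hJ : J.card + 1 < q) (hij : i ≠ j) (hik : i ≠ k) (hjk : j ≠ k)
    (hi : i ∉ J) (hj : j ∉ J) (hk : k ∉ J) (hτ : τ i = τ k)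
    (h1 : StrictP ge (insert k J) (some i) (some j))
    (h2 : StrictP ge (insert i J) (some j) (some k)) :
    StrictP ge (insert j J) (some i) (some k) := by
  have hJ' : J.card < q := by omega
  -- if `k` were weakly above `i` at `J`, DC would turn `h1` into `j ≻ k` failing at `J ∪ {i}`
  have hnki : ¬ ge J (some k) (some i) := fun hki =>
    h2.2 ((hDC J k i (some j) hJ hik.symm hk hi (notInOpt_some hj)
      (by simp [hjk]) (by simp [hij.symm]) hτ.symm hki).1 h1).1
  have hikJ := strictP_of_not_ge hcomp hJ' (notInOpt_some hi) (notInOpt_some hk) hnki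
  exact (hWO J _ i k hJ' ((card_insert_le j J).trans_lt hJ) hi hk
    (by simp [hij, hi]) (by simp [hjk.symm, hk]) hτ).1 hikJ

lemma strictP_insert_of_types_ne (htr : TransP q ge) (hPD : PD τ q ge)
    (hJ : J.card + 1 < q) (hij : i ≠ j) (hik : i ≠ k) (hjk : j ≠ k)
    (hi : i ∉ J) (hj : j ∉ J) (hk : k ∉ J)
    (hτij : τ i ≠ τ j) (hτjk : τ j ≠ τ k) (hτik : τ i ≠ τ k)
    (h1 : StrictP ge (insert k J) (some i) (some j))
    (h2 : StrictP ge (insert i J) (some j) (some k)) :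
    StrictP ge (insert j J) (some i) (some k) := by
  have hJ' : J.card < q := by omega
  have hcard : ∀ x, (insert x J).card < q := fun x => (card_insert_le x J).trans_lt hJ
  have h1J : StrictP ge J (some i) (some j) :=
    (hPD _ J (some i) (some j) (hcard k) hJ' (notInOpt_some (by simp [hik, hi]))
      (notInOpt_some (by simp [hjk, hj])) (notInOpt_some hi) (notInOpt_some hj)
      (tcnt_mono τ (subset_insert k J) _) (tcnt_insert_of_ne τ J hτjk.symm).le).1 h1
  have h2J : StrictP ge J (some j) (some k) :=
    (hPD _ J (some j) (some k) (hcard i) hJ' (notInOpt_some (by simp [hij.symm, hj]))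
      (notInOpt_some (by simp [hik.symm, hk])) (notInOpt_some hj) (notInOpt_some hk)
      (tcnt_mono τ (subset_insert i J) _) (tcnt_insert_of_ne τ J hτik).le).1 h2
  have hikJ := h1J.trans htr hJ' (notInOpt_some hi) (notInOpt_some hj) (notInOpt_some hk) h2J
  exact (hPD J _ (some i) (some k) hJ' (hcard j) (notInOpt_some hi) (notInOpt_some hk)
    (notInOpt_some (by simp [hij, hi])) (notInOpt_some (by simp [hjk.symm, hk]))
    (tcnt_insert_of_ne τ J hτij.symm).le (tcnt_mono τ (subset_insert j J) _)).1 hikJ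

end Cases

/-- **Lemma 1.** If `≿ₛ` satisfies PD, WO and DC, then for any `J` with `|J∪{·}| ≤ qₛ − 1` and
distinct `i, j, k ∉ J`: `i ≻ₛ^{J∪{k}} j` and `j ≻ₛ^{J∪{i}} k` imply `i ≻ₛ^{J∪{j}} k`. -/
theorem lemma1 [DecidableEq I] [DecidableEq T] (τ : I → T) (q : ℕ)
    (ge : Finset I → Option I → Option I → Prop)
    (hcomp : CompleteP q ge) (htr : TransP q ge)
    (hPD : PD τ q ge) (hWO : WO τ q ge) (hDC : DC τ q ge)
    (J : Finset I) (hJ : J.card + 1 < q)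
    (i j k : I) (hij : i ≠ j) (hik : i ≠ k) (hjk : j ≠ k)
    (hi : i ∉ J) (hj : j ∉ J) (hk : k ∉ J)
    (h1 : StrictP ge (insert k J) (some i) (some j))
    (h2 : StrictP ge (insert i J) (some j) (some k)) :
    StrictP ge (insert j J) (some i) (some k) := by
  by_cases hτij : τ i = τ j
  · exact strictP_insert_of_type_eq_left hWO hDC hJ hij hik hjk hi hj hk hτij h1 h2
  by_cases hτjk : τ j = τ k
  · exact strictP_insert_of_type_eq_right hcomp hWO hDC hJ hij hik hjk hi hj hk hτjk h1 h2
  by_cases hτik : τ i = τ k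
  · exact strictP_insert_of_type_eq_outer hcomp hWO hDC hJ hij hik hjk hi hj hk hτik h1 h2
  exact strictP_insert_of_types_ne htr hPD hJ hij hik hjk hi hj hk hτij hτjk hτik h1 h2
end

section
/- Suppose the scores σ_1, …, σ_{|I|} are pairwise distinct, and C_s is a choice function generated by reserves for priority determined by σ with reserve vector r satisfying Σ_t r_t ≤ q_s. Let ≿_s be the adjusted scoring rule with bonus α_t(x) = 2 if x < r_t and α_t(x) = 0 if x ≥ r_t, and threshold σ̲ < 0. Then ≿_s^J is a linear order for all J with |J| ≤ q_s − 1, and C_s is consistent with ≿_s. -/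
/-!
Adjusted scores of students lie in `[0, 1] ∪ [2, 3]`, while the null student scores `σ̲ < 0`;
since the bonus is `0` or `2`, distinct raw scores give distinct adjusted scores, so every
`≿ₛᴶ` is a linear order.

For consistency, let `i ∈ Cₛ(J)` and `j ∈ J ∖ Cₛ(J)`. By (i) the reserve of `j`'s type is
already filled by `Cₛ(J)`, so against `Cₛ(J) ∖ {i}` the student `j` gets no bonus unless `i`
has the same type, in which case both get the same bonus. If `σ_j < σ_i` we are done; otherwise
(ii) says that `i` is of another type and lies within its reserve, so `i` gets the bonus `2`.
Rejection below capacity is excluded by (iii).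
-/

open Finset

variable {I T S : Type*}

/-- Adjusted score of a (possibly null) student given the assignment `J`:
`f_i(J) = σ_i + α_{τ(i)}(|J ∩ I^{τ(i)}|)` and `f_∅(J) = σ̲`. -/
noncomputable def adjF [DecidableEq T] (τ : I → T) (σ : I → ℝ) (sig : ℝ)
    (α : T → ℕ → ℝ) (J : Finset I) : Option I → ℝ
  | none => sig
  | some i => σ i + α (τ i) ((J.filter fun x => τ x = τ i).card)

/-- The adjusted scoring rule: `a ≿ₛᴶ b` iff `f_a(J) ≥ f_b(J)`. -/
def adjGe [DecidableEq T] (τ : I → T) (σ : I → ℝ) (sig : ℝ) (α : T → ℕ → ℝ)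
    (J : Finset I) (a b : Option I) : Prop :=
  adjF τ σ sig α J b ≤ adjF τ σ sig α J a

/-- The choice function `C` is consistent with the priority profile `ge = ≿ₛ`. -/
def ConsistentP [DecidableEq I] (q : ℕ)
    (ge : Finset I → Option I → Option I → Prop) (C : Finset I → Finset I) : Prop :=
  ∀ J : Finset I,
    (∀ i ∈ C J,
      (∀ j ∈ J \ C J, ge ((C J).erase i) (some i) (some j)) ∧
        ge ((C J).erase i) (some i) none) ∧
    ((C J).card < q → (C J).card < J.card →
      ∀ j ∈ J \ C J, StrictP ge (C J) none (some j))

/-- `C` is substitutable. -/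
def SubstitutableP [DecidableEq I] (C : Finset I → Finset I) : Prop :=
  ∀ (J : Finset I) (i j : I), j ∉ J → i ∈ C (insert j J) → i ∈ C J

open Function

def reserveBonus (r : T → ℕ) (t : T) (x : ℕ) : ℝ := if x < r t then 2 else 0

lemma reserveBonus_nonneg (r : T → ℕ) (t : T) (x : ℕ) : 0 ≤ reserveBonus r t x := by
  unfold reserveBonus; split <;> norm_num

lemma reserveBonus_eq_zero_of_le {r : T → ℕ} {t : T} {x : ℕ} (h : r t ≤ x) :
    reserveBonus r t x = 0 :=
  if_neg h.not_gt

lemma reserveBonus_eq_two_of_lt {r : T → ℕ} {t : T} {x : ℕ} (h : x < r t) :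
    reserveBonus r t x = 2 :=
  if_pos h

section Counts

variable [DecidableEq I] [DecidableEq T] (τ : I → T) {A : Finset I} {i : I}

lemma le_card_filter_of_mem_sdiff {J : Finset I} {j : I} {n : ℕ}
    (hA : A ⊆ J) (hj : j ∈ J \ A)
    (hres : min n (J.filter fun x => τ x = τ j).card ≤ (A.filter fun x => τ x = τ j).card) :
    n ≤ (A.filter fun x => τ x = τ j).card := by
  have hlt : (A.filter fun x => τ x = τ j).card < (J.filter fun x => τ x = τ j).card := by
    refine card_lt_card ⟨filter_subset_filter _ hA, fun h => ?_⟩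
    exact (mem_sdiff.1 hj).2 (mem_filter.1 (h (mem_filter.2 ⟨(mem_sdiff.1 hj).1, rfl⟩))).1
  omega

lemma card_filter_erase_of_ne {t : T} (h : τ i ≠ t) :
    ((A.erase i).filter fun x => τ x = t).card = (A.filter fun x => τ x = t).card := by
  rw [filter_erase]
  exact congrArg card (erase_eq_of_notMem fun hi => h (mem_filter.1 hi).2)

lemma card_filter_erase_add_one (hi : i ∈ A) :
    ((A.erase i).filter fun x => τ x = τ i).card + 1 = (A.filter fun x => τ x = τ i).card := by
  rw [filter_erase]
  exact card_erase_add_one (mem_filter.2 ⟨hi, rfl⟩)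

end Counts

section AdjustedScore

variable [DecidableEq T] (τ : I → T) (σ : I → ℝ) (sig : ℝ)

lemma adjF_none_lt_adjF_some {α : T → ℕ → ℝ} (hα : ∀ t x, 0 ≤ α t x) {i : I} (hσ : 0 ≤ σ i)
    (hsig : sig < 0) (J : Finset I) :
    adjF τ σ sig α J none < adjF τ σ sig α J (some i) := by
  show sig < σ i + _
  linarith [hα (τ i) ((J.filter fun x => τ x = τ i).card)]

lemma adjF_reserveBonus_injective (r : T → ℕ) (hσ : ∀ i, σ i ∈ Set.Icc (0 : ℝ) 1)
    (hdist : Injective σ) (hsig : sig < 0) (J : Finset I) :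
    Injective (adjF τ σ sig (reserveBonus r) J) := by
  have hnone := fun i => adjF_none_lt_adjF_some τ σ sig (reserveBonus_nonneg r) (hσ i).1 hsig J
  rintro (_ | i) (_ | j) h
  · rfl
  · exact absurd h (hnone j).ne
  · exact absurd h (hnone i).ne'
  · have hσij : σ i = σ j := by
      change σ i + reserveBonus r _ _ = σ j + reserveBonus r _ _ at h
      unfold reserveBonus at h
      split_ifs at h <;> linarith [(hσ i).1, (hσ i).2, (hσ j).1, (hσ j).2]
    exact congrArg some (hdist hσij)

lemma adjGe_linear_of_injective {α : T → ℕ → ℝ}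
    (hinj : ∀ J : Finset I, Injective (adjF τ σ sig α J)) (q : ℕ) :
    CompleteP q (adjGe τ σ sig α) ∧ TransP q (adjGe τ σ sig α) ∧
      AntisymP q (adjGe τ σ sig α) :=
  ⟨fun _ _ _ _ _ _ => le_total _ _,
    fun _ _ _ _ _ _ _ _ hab hbc => hbc.trans hab,
    fun J _ _ _ _ _ hab hba => hinj J (le_antisymm hba hab)⟩

lemma adjF_rejected_le_adjF_chosen [DecidableEq I] (r : T → ℕ)
    (hσ : ∀ i, σ i ∈ Set.Icc (0 : ℝ) 1) {A J : Finset I} (hA : A ⊆ J)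
    (hres1 : ∀ t, min (r t) (J.filter fun x => τ x = t).card ≤ (A.filter fun x => τ x = t).card)
    (hres2 : ∀ i ∈ A, ∀ j ∈ J \ A, σ i < σ j →
      τ i ≠ τ j ∧ (A.filter fun x => τ x = τ i).card ≤ r (τ i))
    {i j : I} (hi : i ∈ A) (hj : j ∈ J \ A) :
    adjF τ σ sig (reserveBonus r) (A.erase i) (some j) ≤
      adjF τ σ sig (reserveBonus r) (A.erase i) (some i) := by
  change σ j + reserveBonus r _ _ ≤ σ i + reserveBonus r _ _
  by_cases hτ : τ i = τ j
  · have hσji : σ j ≤ σ i := not_lt.1 fun hlt => (hres2 i hi j hj hlt).1 hτ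
    rw [hτ]
    linarith
  · have hfull := le_card_filter_of_mem_sdiff τ hA hj (hres1 (τ j))
    rw [reserveBonus_eq_zero_of_le ((card_filter_erase_of_ne τ hτ).symm ▸ hfull), add_zero]
    rcases lt_or_ge (σ i) (σ j) with hlt | hge
    · have hwithin := (hres2 i hi j hj hlt).2
      have hcount := card_filter_erase_add_one τ hi
      rw [reserveBonus_eq_two_of_lt (by omega)]
      linarith [(hσ i).1, (hσ j).2]
    · linarith [reserveBonus_nonneg r (τ i) ((A.erase i).filter fun x => τ x = τ i).card]

end AdjustedScore

theorem proposition2_general [DecidableEq I] [DecidableEq T] (τ : I → T) (q : ℕ)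
    (σ : I → ℝ) (hσ : ∀ i, σ i ∈ Set.Icc (0 : ℝ) 1) (hdist : Function.Injective σ)
    (sig : ℝ) (hsig : sig < 0)
    (r : T → ℕ)
    (α : T → ℕ → ℝ) (hα : ∀ t x, α t x = if x < r t then 2 else 0)
    (C : Finset I → Finset I) (hsub : ∀ J, C J ⊆ J)
    -- (i): each type fills its reserve as far as possible
    (hres1 : ∀ (J : Finset I) (t : T),
      min (r t) (J.filter fun x => τ x = t).card ≤ ((C J).filter fun x => τ x = t).card)
    -- (ii): a rejected student may beat a chosen one only across types, within the reserve
    (hres2 : ∀ J, ∀ i ∈ C J, ∀ j ∈ J \ C J, σ i < σ j →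
      τ i ≠ τ j ∧ ((C J).filter fun x => τ x = τ i).card ≤ r (τ i))
    -- (iii): rejections happen only at full capacity
    (hres3 : ∀ J : Finset I, (J \ C J).Nonempty → (C J).card = q) :
    (CompleteP q (adjGe τ σ sig α) ∧ TransP q (adjGe τ σ sig α) ∧
        AntisymP q (adjGe τ σ sig α)) ∧
      ConsistentP q (adjGe τ σ sig α) C := by
  obtain rfl : α = reserveBonus r := funext₂ hα
  refine ⟨adjGe_linear_of_injective τ σ sig
    (adjF_reserveBonus_injective τ σ sig r hσ hdist hsig) q, fun J => ⟨fun i hi => ⟨?_, ?_⟩, ?_⟩⟩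
  · exact fun j hj => adjF_rejected_le_adjF_chosen τ σ sig r hσ (hsub J) (hres1 J) (hres2 J) hi hj
  · exact (adjF_none_lt_adjF_some τ σ sig (reserveBonus_nonneg r) (hσ i).1 hsig _).le
  · exact fun hlt _ j hj => absurd (hres3 J ⟨j, hj⟩) hlt.ne

/-- **Proposition 2.** Suppose scores are pairwise distinct and `Cₛ` is generated by reserves
(for priority determined by `σ`, reserve vector `r` with `∑ₜ rₜ ≤ qₛ`). With bonus
`α_t(x) = 2` if `x < r_t` and `0` otherwise, and threshold `σ̲ < 0`, the adjusted scoring rule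
`≿ₛᴶ` is a linear order for every `J` with `|J| ≤ qₛ − 1`, and `Cₛ` is consistent with it. -/
theorem proposition2 [DecidableEq I] [DecidableEq T] [Fintype T] (τ : I → T) (q : ℕ)
    (σ : I → ℝ) (hσ : ∀ i, σ i ∈ Set.Icc (0 : ℝ) 1) (hdist : Function.Injective σ)
    (sig : ℝ) (hsig : sig < 0)
    (r : T → ℕ) (hr : ∀ t, 0 < r t) (hsum : ∑ t, r t ≤ q)
    (α : T → ℕ → ℝ) (hα : ∀ t x, α t x = if x < r t then 2 else 0)
    (C : Finset I → Finset I) (hsub : ∀ J, C J ⊆ J) (hcard : ∀ J, (C J).card ≤ q)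
    -- (i): each type fills its reserve as far as possible
    (hres1 : ∀ (J : Finset I) (t : T),
      min (r t) (J.filter fun x => τ x = t).card ≤ ((C J).filter fun x => τ x = t).card)
    -- (ii): a rejected student may beat a chosen one only across types, within the reserve
    (hres2 : ∀ J, ∀ i ∈ C J, ∀ j ∈ J \ C J, σ i < σ j →
      τ i ≠ τ j ∧ ((C J).filter fun x => τ x = τ i).card ≤ r (τ i))
    -- (iii): rejections happen only at full capacity
    (hres3 : ∀ J : Finset I, (J \ C J).Nonempty → (C J).card = q) :
    (CompleteP q (adjGe τ σ sig α) ∧ TransP q (adjGe τ σ sig α) ∧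
        AntisymP q (adjGe τ σ sig α)) ∧
      ConsistentP q (adjGe τ σ sig α) C :=
  proposition2_general τ q σ hσ hdist sig hsig r α hα C hsub hres1 hres2 hres3
end

section
/- Suppose ≿_s satisfies PD, WO, and DC. Then the sequentially constructed choice function C_s^≿ is consistent with ≿_s: for any J ⊆ I, (1) for any i ∈ C_s^≿(J) and j ∈ (J∖C_s^≿(J)) ∪ {∅}, i ≿_s^{C_s^≿(J)∖{i}} j; and (2) if |C_s^≿(J)| < q_s and |C_s^≿(J)| < |J|, then ∅ ≻_s^{C_s^≿(J)} j for all j ∈ J∖C_s^≿(J). -/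
open Finset

variable {I T S : Type*}

section Build

variable {I : Type*} [LinearOrder I] [Fintype I]

/-- `i` has the lowest priority within `K`: no `j ∈ K` has strictly lower priority than `i`
with the assignment `K∖{i,j}`. -/
def LowestIn [DecidableEq I] (ge : Finset I → Option I → Option I → Prop)
    (K : Finset I) (i : I) : Prop :=
  ∀ j ∈ K.erase i, ¬ StrictP ge ((K.erase i).erase j) (some i) (some j)

open scoped Classical in
/-- Processing a list of applicants one by one: an applicant is accepted while a seat remains
and she is acceptable with the current set; once capacity `q` is full, the most recently
arrived student (i.e. the one with the largest label) among those with lowest priority within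
the current set plus the applicant is rejected. -/
noncomputable def buildC [DecidableEq I] (ge : Finset I → Option I → Option I → Prop)
    (q : ℕ) : List I → Finset I → Finset I
  | [], C => C
  | a :: rest, C =>
    if C.card < q then
      if ge C (some a) none then buildC ge q rest (insert a C)
      else buildC ge q rest C
    else
      buildC ge q rest
        ((insert a C).erase
          ((((insert a C).filter (LowestIn ge (insert a C))).max).getD a))

/-- The choice function `Cₛ^≿` constructed from the priority profile `ge = ≿ₛ`, processing
the students of `J` in increasing label order. -/
noncomputable def Cchoice [DecidableEq I] (ge : Finset I → Option I → Option I → Prop)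
    (q : ℕ) (J : Finset I) : Finset I :=
  buildC ge q (J.sort (· ≤ ·)) ∅

/-- The intermediate set `Cₛᵍ(J)` after the first `g` steps of the construction. -/
noncomputable def Cstep [DecidableEq I] (ge : Finset I → Option I → Option I → Prop)
    (q : ℕ) (J : Finset I) (g : ℕ) : Finset I :=
  buildC ge q ((J.sort (· ≤ ·)).take g) ∅

end Build

/-!
Follow the construction step by step, keeping the invariant `IsConsistentChoice q ge P C`: once
the applicants in `P` have been processed, every tentatively admitted student is acceptable and
beats every rejected applicant (with the other admitted students as assignment), and while seats
remain every rejected applicant is unacceptable. Accepting or skipping an applicant preserves it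
by PD, or by DC together with the labelling when the newcomer has the type of an admitted student.

When the school is full, DC and PD make "`x` outranks `y` given the rest" a strict order on the
`q + 1` candidates, so a lowest-priority student `m` exists and all others weakly outrank `m`.
If `m` is not the newcomer `a`, the labelling forces `τ a ≠ τ m` (otherwise `a`, arriving later,
would be lowest too), so by PD the comparisons of `m` with outsiders survive the exchange of `m`
for `a`, and transitivity through `m` restores the invariant.
-/

namespace SequentialChoice

lemma notInOpt_some {J : Finset I} {i : I} (h : i ∉ J) : NotInOpt (some i) J :=
  fun _ hx => Option.mem_some_iff.1 hx ▸ h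

lemma notInOpt_none {J : Finset I} : NotInOpt (none : Option I) J :=
  fun _ hx => nomatch hx

lemma notInOpt_mono {J J' : Finset I} {b : Option I} (h : NotInOpt b J) (hJ : J' ⊆ J) :
    NotInOpt b J' :=
  fun x hx hxJ => h x hx (hJ hxJ)

lemma notInOpt_insert [DecidableEq I] {J : Finset I} {a : I} {b : Option I}
    (h : NotInOpt b J) (hb : b ≠ some a) : NotInOpt b (insert a J) := by
  intro x hx hxJ
  rcases mem_insert.1 hxJ with rfl | hxJ
  · exact hb (Option.mem_def.1 hx)
  · exact h x hx hxJ

lemma tcnt_mono [DecidableEq T] (τ : I → T) {J J' : Finset I} (h : J ⊆ J') (a : Option I) :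
    tcnt τ J a ≤ tcnt τ J' a := by
  cases a with
  | none => exact le_rfl
  | some i => exact card_le_card (filter_subset_filter _ h)

section TypeCount

variable [DecidableEq I] [DecidableEq T] (τ : I → T)

lemma tcnt_insert_of_ne {J : Finset I} {a i : I} (h : τ a ≠ τ i) :
    tcnt τ (insert a J) (some i) = tcnt τ J (some i) := by
  simp [tcnt, filter_insert, h]

lemma tcnt_erase_of_ne {J : Finset I} {m i : I} (h : τ m ≠ τ i) :
    tcnt τ (J.erase m) (some i) = tcnt τ J (some i) := by
  simp only [tcnt]
  rw [filter_erase, erase_eq_of_notMem (by simp [h])]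

end TypeCount

lemma _root_.Finset.exists_mem_forall_not_rel {α : Type*} (s : Finset α) (r : α → α → Prop)
    (hs : s.Nonempty) (irrefl : ∀ x ∈ s, ¬ r x x)
    (trans : ∀ x ∈ s, ∀ y ∈ s, ∀ z ∈ s, r x y → r y z → r x z) :
    ∃ m ∈ s, ∀ y ∈ s, ¬ r m y := by
  let r' : s → s → Prop := fun x y => r y x
  have : IsTrans s r' := ⟨fun x y z hxy hyz => trans _ z.2 _ y.2 _ x.2 hyz hxy⟩
  have : Std.Irrefl r' := ⟨fun x => irrefl _ x.2⟩
  obtain ⟨m, -, hm⟩ := (Finite.wellFounded_of_trans_of_irrefl r').has_min Set.univ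
    ⟨⟨_, hs.choose_spec⟩, trivial⟩
  exact ⟨m, m.2, fun y hy => hm ⟨y, hy⟩ trivial⟩

section Outranks

variable [DecidableEq I] (ge : Finset I → Option I → Option I → Prop)

def Outranks (K : Finset I) (x y : I) : Prop :=
  x ≠ y ∧ StrictP ge ((K.erase x).erase y) (some x) (some y)

variable {ge} {K : Finset I} {x y : I}

lemma lowestIn_iff_forall_not_outranks : LowestIn ge K x ↔ ∀ y ∈ K, ¬ Outranks ge K x y :=
  ⟨fun h y hy hxy => h y (mem_erase.2 ⟨hxy.1.symm, hy⟩) hxy.2,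
    fun h y hy hs => h y (mem_of_mem_erase hy) ⟨(ne_of_mem_erase hy).symm, hs⟩⟩

lemma Outranks.asymm (h : Outranks ge K x y) : ¬ Outranks ge K y x := by
  rintro ⟨-, h'⟩
  rw [erase_right_comm] at h'
  exact h.2.2 h'.1

end Outranks

section Choice

variable [DecidableEq I]

structure IsConsistentChoice (q : ℕ) (ge : Finset I → Option I → Option I → Prop)
    (P C : Finset I) : Prop where
  subset : C ⊆ P
  card_le : C.card ≤ q
  accepts : ∀ i ∈ C, ge (C.erase i) (some i) none
  beats : ∀ i ∈ C, ∀ j ∈ P \ C, ge (C.erase i) (some i) (some j)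
  rejects : C.card < q → ∀ j ∈ P \ C, StrictP ge C none (some j)

namespace IsConsistentChoice

variable {q : ℕ} {ge : Finset I → Option I → Option I → Prop} {P C : Finset I} {a : I}

lemma insert_rejected (h : IsConsistentChoice q ge P C)
    (hbeat : ∀ i ∈ C, ge (C.erase i) (some i) (some a))
    (hrej : C.card < q → StrictP ge C none (some a)) :
    IsConsistentChoice q ge (insert a P) C := by
  have hmem : ∀ j ∈ insert a P \ C, j = a ∨ j ∈ P \ C := by
    intro j hj
    simp only [mem_sdiff, mem_insert] at hj ⊢
    tauto
  refine ⟨h.subset.trans (subset_insert a P), h.card_le, h.accepts, fun i hi j hj => ?_,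
    fun hC j hj => ?_⟩
  · rcases hmem j hj with rfl | hj
    exacts [hbeat i hi, h.beats i hi j hj]
  · rcases hmem j hj with rfl | hj
    exacts [hrej hC, h.rejects hC j hj]

lemma notMem_of_forall_lt [LinearOrder I] (h : IsConsistentChoice q ge P C)
    (ha : ∀ x ∈ P, x < a) : a ∉ C :=
  fun haC => lt_irrefl a (ha a (h.subset haC))

end IsConsistentChoice

end Choice

variable [LinearOrder I] [DecidableEq I] [DecidableEq T]

structure ProfileAxioms (τ : I → T) (q : ℕ)
    (ge : Finset I → Option I → Option I → Prop) : Prop where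
  complete : CompleteP q ge
  trans : TransP q ge
  pd : PD τ q ge
  wo : WO τ q ge
  dc : DC τ q ge
  label : ∀ J : Finset I, J.card < q → ∀ i j : I, i ∉ J → j ∉ J →
    τ i = τ j → i ≤ j → ge J (some i) (some j)

namespace ProfileAxioms

variable {τ : I → T} {q : ℕ} {ge : Finset I → Option I → Option I → Prop}
  (A : ProfileAxioms τ q ge) {J J' : Finset I} {a b c : Option I}
include A

lemma strictP_of_not_ge (hJ : J.card < q) (ha : NotInOpt a J) (hb : NotInOpt b J)
    (h : ¬ ge J a b) : StrictP ge J b a :=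
  ⟨(A.complete J hJ a b ha hb).resolve_left h, h⟩

lemma ge_iff_not_strictP (hJ : J.card < q) (ha : NotInOpt a J) (hb : NotInOpt b J) :
    ge J a b ↔ ¬ StrictP ge J b a :=
  ⟨fun h h' => h'.2 h, fun h => by_contra fun h' => h (A.strictP_of_not_ge hJ ha hb h')⟩

lemma trichotomy (hJ : J.card < q) (ha : NotInOpt a J) (hb : NotInOpt b J) :
    StrictP ge J a b ∨ SimP ge J a b ∨ StrictP ge J b a := by
  by_cases hab : ge J a b <;> by_cases hba : ge J b a
  · exact Or.inr (Or.inl ⟨hab, hba⟩)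
  · exact Or.inl ⟨hab, hba⟩
  · exact Or.inr (Or.inr ⟨hba, hab⟩)
  · exact absurd (A.complete J hJ a b ha hb) (by tauto)

lemma ge_trans (hJ : J.card < q) (ha : NotInOpt a J) (hb : NotInOpt b J) (hc : NotInOpt c J)
    (hab : ge J a b) (hbc : ge J b c) : ge J a c :=
  A.trans J hJ a b c ha hb hc hab hbc

lemma strictP_of_strictP_of_ge (hJ : J.card < q) (ha : NotInOpt a J) (hb : NotInOpt b J)
    (hc : NotInOpt c J) (hab : StrictP ge J a b) (hbc : ge J b c) : StrictP ge J a c :=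
  ⟨A.ge_trans hJ ha hb hc hab.1 hbc, fun hca => hab.2 (A.ge_trans hJ hb hc ha hbc hca)⟩

lemma pd_of_subset (hJ : J.card < q) (hJ' : J' ⊆ J) (ha : NotInOpt a J) (hb : NotInOpt b J)
    (hcnt : tcnt τ J b ≤ tcnt τ J' b) :
    (StrictP ge J a b → StrictP ge J' a b) ∧ (ge J a b → ge J' a b) :=
  A.pd J J' a b hJ ((card_le_card hJ').trans_lt hJ) ha hb (notInOpt_mono ha hJ')
    (notInOpt_mono hb hJ')    (tcnt_mono τ hJ' a) hcnt

lemma pd_of_superset (hJ' : J'.card < q) (hJ : J ⊆ J') (ha : NotInOpt a J')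
    (hb : NotInOpt b J') (hcnt : tcnt τ J' a ≤ tcnt τ J a) :
    (StrictP ge J a b → StrictP ge J' a b) ∧ (ge J a b → ge J' a b) :=
  A.pd J J' a b ((card_le_card hJ).trans_lt hJ') hJ' (notInOpt_mono ha hJ) (notInOpt_mono hb hJ)
    ha hb hcnt    (tcnt_mono τ hJ b)

section Swap

variable {i j : I} {k : Option I} (hJ : J.card + 1 < q) (hij : i ≠ j) (hi : i ∉ J)
  (hj : j ∉ J) (hk : NotInOpt k J) (hki : k ≠ some i) (hkj : k ≠ some j) (hτ : τ i = τ j)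
include hJ hij hi hj hk hki hkj hτ

-- By completeness the three clauses of DC are exhaustive, hence equivalences; by the labelling
-- DC applies to a same-type pair in either order.
lemma strictP_swap_left :
    StrictP ge (insert i J) (some j) k ↔ StrictP ge (insert j J) (some i) k := by
  wlog hle : i ≤ j generalizing i j
  · exact (this hij.symm hj hi hkj hki hτ.symm (le_of_not_ge hle)).symm
  have hdc := A.dc J i j k hJ hij hi hj hk hki hkj hτ (A.label J (by omega) i j hi hj hτ hle)
  refine ⟨hdc.1, fun h => ?_⟩
  rcases A.trichotomy (by rw [card_insert_of_notMem hi]; exact hJ)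
      (notInOpt_some (show j ∉ insert i J by simp [hij.symm, hj])) (notInOpt_insert hk hki)
      with h' | h' | h'
  · exact h'
  · exact absurd (hdc.2.1 h').2 h.2
  · exact absurd (hdc.2.2 h').1 h.2

lemma strictP_swap_right :
    StrictP ge (insert i J) k (some j) ↔ StrictP ge (insert j J) k (some i) := by
  wlog hle : i ≤ j generalizing i j
  · exact (this hij.symm hj hi hkj hki hτ.symm (le_of_not_ge hle)).symm
  have hdc := A.dc J i j k hJ hij hi hj hk hki hkj hτ (A.label J (by omega) i j hi hj hτ hle)
  refine ⟨hdc.2.2, fun h => ?_⟩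
  rcases A.trichotomy (by rw [card_insert_of_notMem hi]; exact hJ) (notInOpt_insert hk hki)
      (notInOpt_some (show j ∉ insert i J by simp [hij.symm, hj])) with h' | h' | h'
  · exact h'
  · exact absurd (hdc.2.1 ⟨h'.2, h'.1⟩).1 h.2
  · exact absurd (hdc.1 h').1 h.2

lemma ge_swap_left : ge (insert i J) (some j) k ↔ ge (insert j J) (some i) k := by
  rw [A.ge_iff_not_strictP (by rw [card_insert_of_notMem hi]; exact hJ)
      (notInOpt_some (show j ∉ insert i J by simp [hij.symm, hj])) (notInOpt_insert hk hki),
    A.ge_iff_not_strictP (by rw [card_insert_of_notMem hj]; exact hJ)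
      (notInOpt_some (show i ∉ insert j J by simp [hij, hi])) (notInOpt_insert hk hkj),
    A.strictP_swap_right hJ hij hi hj hk hki hkj hτ]

end Swap

lemma strictP_insert_trans {W : Finset I} {x y z : I} (hW : W.card + 1 < q)
    (hx : x ∉ W) (hy : y ∉ W) (hz : z ∉ W) (hxy : x ≠ y) (hxz : x ≠ z) (hyz : y ≠ z)
    (h₁ : StrictP ge (insert z W) (some x) (some y))
    (h₂ : StrictP ge (insert x W) (some y) (some z)) :
    StrictP ge (insert y W) (some x) (some z) := by
  by_cases hτxy : τ x = τ y
  · exact (A.strictP_swap_left hW hxy hx hy (notInOpt_some hz) (by simpa using hxz.symm)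
      (by simpa using hyz.symm) hτxy).1 h₂
  by_cases hτyz : τ y = τ z
  · exact (A.strictP_swap_right hW hyz.symm hz hy (notInOpt_some hx) (by simpa using hxz)
      (by simpa using hxy) hτyz.symm).1 h₁
  by_cases hτxz : τ x = τ z
  · exact absurd ((A.strictP_swap_left hW hxz.symm hz hx (notInOpt_some hy) (by simpa using hyz)
      (by simpa using hxy.symm) hτxz.symm).1 h₁).1 h₂.2
  -- three distinct types: by PD, adding or removing a student of a third type is harmless
  have s₁ : StrictP ge W (some x) (some y) :=
    (A.pd_of_subset ((card_insert_le z W).trans_lt hW) (subset_insert z W)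
      (notInOpt_some (by simp [hxz, hx])) (notInOpt_some (by simp [hyz, hy]))
      (tcnt_insert_of_ne τ (Ne.symm hτyz)).le).1 h₁
  have s₂ : StrictP ge W (some y) (some z) :=
    (A.pd_of_subset ((card_insert_le x W).trans_lt hW) (subset_insert x W)
      (notInOpt_some (by simp [hxy.symm, hy])) (notInOpt_some (by simp [hxz.symm, hz]))
      (tcnt_insert_of_ne τ hτxz).le).1 h₂
  exact (A.pd_of_superset ((card_insert_le y W).trans_lt hW) (subset_insert y W)
    (notInOpt_some (by simp [hxy, hx])) (notInOpt_some (by simp [hyz.symm, hz]))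
    (tcnt_insert_of_ne τ (Ne.symm hτxy)).le).1
    (A.strictP_of_strictP_of_ge (by omega) (notInOpt_some hx) (notInOpt_some hy)
      (notInOpt_some hz) s₁ s₂.1)

lemma outranks_trans {K : Finset I} {x y z : I} (hK : K.card ≤ q + 1) (hx : x ∈ K)
    (hy : y ∈ K) (hz : z ∈ K) (hxy : Outranks ge K x y) (hyz : Outranks ge K y z) :
    Outranks ge K x z := by
  by_cases hxz : x = z
  · subst hxz
    exact absurd hyz hxy.asymm
  obtain ⟨hxy, sxy⟩ := hxy
  obtain ⟨hyz, syz⟩ := hyz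
  set W := ((K.erase x).erase y).erase z
  have e₁ : insert z W = (K.erase x).erase y := by
    ext t; simp only [W, mem_insert, mem_erase]; grind
  have e₂ : insert x W = (K.erase y).erase z := by
    ext t; simp only [W, mem_insert, mem_erase]; grind
  have e₃ : insert y W = (K.erase x).erase z := by
    ext t; simp only [W, mem_insert, mem_erase]; grind
  have hW : W.card + 3 = K.card := by grind [card_erase_of_mem]
  rw [← e₁] at sxy
  rw [← e₂] at syz
  exact ⟨hxz, e₃ ▸ A.strictP_insert_trans (by omega) (by simp [W]) (by simp [W])
    (by simp [W]) hxy hxz hyz sxy syz⟩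

lemma exists_lowestIn {K : Finset I} (hK : K.card ≤ q + 1) (hne : K.Nonempty) :
    ∃ m ∈ K, LowestIn ge K m := by
  obtain ⟨m, hm, hmin⟩ := K.exists_mem_forall_not_rel (Outranks ge K) hne
    (fun _ _ h => h.1 rfl) fun _ hx _ hy _ hz => A.outranks_trans hK hx hy hz
  exact ⟨m, hm, lowestIn_iff_forall_not_outranks.2 hmin⟩

open scoped Classical in
lemma isGreatest_lowestIn {K : Finset I} {a : I} (hK : K.card ≤ q + 1) (ha : a ∈ K) :
    IsGreatest {m | m ∈ K ∧ LowestIn ge K m} ((K.filter (LowestIn ge K)).max.getD a) := by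
  obtain ⟨m, hm, hlow⟩ := A.exists_lowestIn hK ⟨a, ha⟩
  have hne : (K.filter (LowestIn ge K)).Nonempty := ⟨m, mem_filter.2 ⟨hm, hlow⟩⟩
  rw [← coe_max' hne]
  have h := (K.filter (LowestIn ge K)).isGreatest_max' hne
  rw [coe_filter] at h
  exact h

lemma ge_of_lowestIn {K : Finset I} {m j : I} (hK : K.card ≤ q + 1) (hm : m ∈ K)
    (hlow : LowestIn ge K m) (hj : j ∈ K) (hjm : j ≠ m) :
    ge ((K.erase m).erase j) (some j) (some m) :=
  (A.ge_iff_not_strictP (by grind [card_erase_of_mem, one_lt_card])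
    (notInOpt_some (notMem_erase j _))
    (notInOpt_some fun h => notMem_erase m K (mem_of_mem_erase h))).2
    (hlow j (mem_erase.2 ⟨hjm, hj⟩))

lemma lowestIn_of_type_eq {K : Finset I} {m a : I} (hK : K.card ≤ q + 1) (hm : m ∈ K)
    (ha : a ∈ K) (hma : m < a) (hτ : τ a = τ m) (hlow : LowestIn ge K m) :
    LowestIn ge K a := by
  intro j hj hs
  obtain ⟨hja, hjK⟩ := mem_erase.1 hj
  rcases eq_or_ne j m with rfl | hjm
  · exact hs.2 (A.label _ (by grind [card_erase_of_mem, one_lt_card]) j a (by simp)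
      (by simp) hτ.symm hma.le)
  set J := ((K.erase m).erase a).erase j
  have e₁ : insert m J = (K.erase a).erase j := by
    ext t; simp only [J, mem_insert, mem_erase]; grind
  have e₂ : insert a J = (K.erase m).erase j := by
    ext t; simp only [J, mem_insert, mem_erase]; grind
  have hJ : J.card + 3 = K.card := by grind [card_erase_of_mem]
  rw [← e₁] at hs
  refine hlow j (mem_erase.2 ⟨hjm, hjK⟩) (e₂ ▸ (A.strictP_swap_left (by omega) hma.ne
    (by simp [J]) (by simp [J]) (notInOpt_some (by simp [J])) (by simpa using hjm)
    (by simpa using hja) hτ.symm).1 hs)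

lemma ge_exchange {C : Finset I} {a m i : I} {b : Option I} (hC : C.card ≤ q) (hm : m ∈ C)
    (ha : a ∉ C) (hτ : τ a ≠ τ m) (hi : i ∈ insert a (C.erase m))
    (hb : NotInOpt b (insert a C))
    (him : ge ((insert a (C.erase m)).erase i) (some i) (some m))
    (hmb : ge (C.erase m) (some m) b)
    (hcnt : tcnt τ (C.erase m) b ≤ tcnt τ ((insert a (C.erase m)).erase i) b) :
    ge ((insert a (C.erase m)).erase i) (some i) b := by
  set S := (insert a (C.erase m)).erase i
  have hS : S ⊆ insert a C := (erase_subset i _).trans (insert_subset_insert a (erase_subset m C))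
  have hCm : (C.erase m).card < q := (card_erase_lt_of_mem hm).trans_le hC
  have hSq : S.card < q := by
    rw [card_erase_of_mem hi, card_insert_of_notMem fun h => ha (mem_of_mem_erase h),
      card_erase_of_mem hm]
    have := card_pos.2 ⟨m, hm⟩
    omega
  have hmS : m ∉ S := by simp [S, ne_of_mem_of_not_mem hm ha]
  have hbS : NotInOpt b S := notInOpt_mono hb hS
  have hcnt_m : tcnt τ S (some m) ≤ tcnt τ (C.erase m) (some m) :=
    (tcnt_mono τ (erase_subset i _) _).trans (tcnt_insert_of_ne τ hτ).le
  exact A.ge_trans hSq (notInOpt_some (notMem_erase i _)) (notInOpt_some hmS) hbS him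
    ((A.pd (C.erase m) S (some m) b hCm hSq (notInOpt_some (notMem_erase m C))
      (notInOpt_mono hb ((erase_subset m C).trans (subset_insert a C))) (notInOpt_some hmS) hbS
      hcnt_m hcnt).2 hmb)

lemma ge_insert_erase_of_ge {C : Finset I} {a i : I} {b : Option I} (hC : C.card < q)
    (hi : i ∈ C) (ha : a ∉ C) (hb : NotInOpt b C) (hba : b ≠ some a)
    (hib : ge (C.erase i) (some i) b) (hab : ge C (some a) b) :
    ge (insert a (C.erase i)) (some i) b := by
  have hia : i ≠ a := ne_of_mem_of_not_mem hi ha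
  have haC : a ∉ C.erase i := fun h => ha (mem_of_mem_erase h)
  have hcard : (C.erase i).card + 1 = C.card := card_erase_add_one hi
  have hbC : NotInOpt b (C.erase i) := notInOpt_mono hb (erase_subset i C)
  by_cases hτ : τ i = τ a
  · rw [← insert_erase hi] at hab
    exact (A.ge_swap_left (by omega) hia (notMem_erase i C) haC hbC
      (by rintro rfl; exact hb i rfl hi) hba hτ).1 hab
  · exact (A.pd_of_superset (by rw [card_insert_of_notMem haC]; omega) (subset_insert a _)
      (notInOpt_some (by simp [hia])) (notInOpt_insert hbC hba)
      (tcnt_insert_of_ne τ (Ne.symm hτ)).le).2 hib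

end ProfileAxioms

namespace IsConsistentChoice

variable {q : ℕ} {ge : Finset I → Option I → Option I → Prop} {P C : Finset I} {a m : I}
  {τ : I → T} (A : ProfileAxioms τ q ge)
include A

lemma insert_accepted (h : IsConsistentChoice q ge P C) (ha : ∀ x ∈ P, x < a)
    (hC : C.card < q) (hacc : ge C (some a) none) :
    IsConsistentChoice q ge (insert a P) (insert a C) := by
  have haC : a ∉ C := h.notMem_of_forall_lt ha
  have haj : ∀ j ∈ P \ C, ge C (some a) (some j) := fun j hj =>
    A.ge_trans hC (notInOpt_some haC) notInOpt_none (notInOpt_some (mem_sdiff.1 hj).2) hacc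
      (h.rejects hC j hj).1
  have hmem : ∀ j ∈ insert a P \ insert a C, j ∈ P \ C := by
    intro j hj
    simp only [mem_sdiff, mem_insert] at hj ⊢
    tauto
  refine ⟨insert_subset_insert a h.subset, by rw [card_insert_of_notMem haC]; omega,
    fun i hi => ?_, fun i hi j hj => ?_, fun hC' j hj => ?_⟩
  · rcases mem_insert.1 hi with rfl | hi
    · rwa [erase_insert haC]
    · rw [erase_insert_of_ne (ne_of_mem_of_not_mem hi haC).symm]
      exact A.ge_insert_erase_of_ge hC hi haC notInOpt_none (by simp) (h.accepts i hi) hacc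
  · have hj' := hmem j hj
    rcases mem_insert.1 hi with rfl | hi
    · rw [erase_insert haC]
      exact haj j hj'
    · rw [erase_insert_of_ne (ne_of_mem_of_not_mem hi haC).symm]
      exact A.ge_insert_erase_of_ge hC hi haC (notInOpt_some (mem_sdiff.1 hj').2)
        (by simpa using (ha j (mem_sdiff.1 hj').1).ne) (h.beats i hi j hj') (haj j hj')
  · exact (A.pd_of_superset hC' (subset_insert a C) notInOpt_none
      (notInOpt_some (mem_sdiff.1 hj).2) le_rfl).1 (h.rejects hC j (hmem j hj))

lemma insert_skipped (h : IsConsistentChoice q ge P C) (ha : ∀ x ∈ P, x < a)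
    (hC : C.card < q) (hrej : ¬ ge C (some a) none) :
    IsConsistentChoice q ge (insert a P) C := by
  have haC : a ∉ C := h.notMem_of_forall_lt ha
  have hstrict : StrictP ge C none (some a) :=
    A.strictP_of_not_ge hC (notInOpt_some haC) notInOpt_none hrej
  refine h.insert_rejected (fun i hi => ?_) fun _ => hstrict
  have hCi : (C.erase i).card < q := (card_erase_lt_of_mem hi).trans hC
  have haCi : a ∉ C.erase i := fun h' => haC (mem_of_mem_erase h')
  by_cases hτ : τ i = τ a
  · exact A.label _ hCi i a (notMem_erase i C) haCi hτ (ha i (h.subset hi)).le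
  · have hna : ge (C.erase i) none (some a) := ((A.pd_of_subset hC (erase_subset i C)
      notInOpt_none (notInOpt_some haC) (tcnt_erase_of_ne τ hτ).ge).1 hstrict).1
    exact A.ge_trans hCi (notInOpt_some (notMem_erase i C)) notInOpt_none (notInOpt_some haCi)
      (h.accepts i hi) hna

lemma exchange (h : IsConsistentChoice q ge P C) (ha : ∀ x ∈ P, x < a) (hfull : C.card = q)
    (hm : m ∈ C) (hτ : τ a ≠ τ m)
    (hlow : ∀ i ∈ insert a (C.erase m), ge ((insert a (C.erase m)).erase i) (some i) (some m)) :
    IsConsistentChoice q ge (insert a P) (insert a (C.erase m)) := by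
  have haC : a ∉ C := h.notMem_of_forall_lt ha
  have haCm : a ∉ C.erase m := fun h' => haC (mem_of_mem_erase h')
  have hq : 0 < q := hfull ▸ card_pos.2 ⟨m, hm⟩
  have hcard : (insert a (C.erase m)).card = q := by
    rw [card_insert_of_notMem haCm, card_erase_of_mem hm]; omega
  have key := fun i hi b hb => A.ge_exchange (b := b) hfull.le hm haC hτ hi hb (hlow i hi)
  have hmem : ∀ j ∈ insert a P \ insert a (C.erase m), j = m ∨ j ∈ P \ C := by
    intro j hj
    simp only [mem_sdiff, mem_insert, mem_erase] at hj ⊢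
    tauto
  refine ⟨insert_subset_insert a ((erase_subset m C).trans h.subset), hcard.le,
    fun i hi => key i hi none notInOpt_none (h.accepts m hm) le_rfl, fun i hi j hj => ?_,
    fun hlt => absurd hcard hlt.ne⟩
  rcases hmem j hj with rfl | hjPC
  · exact hlow i hi
  obtain ⟨hjP, hjC⟩ := mem_sdiff.1 hjPC
  have hjaC : j ∉ insert a C := by simp [(ha j hjP).ne, hjC]
  rcases mem_insert.1 hi with rfl | hi'
  · exact key i hi (some j) (notInOpt_some hjaC) (h.beats m hm j hjPC) (by rw [erase_insert haCm])
  have hia : i ≠ a := ne_of_mem_of_not_mem hi' haCm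
  have key := key i hi
  rw [erase_insert_of_ne hia.symm] at key ⊢
  by_cases hτij : τ i = τ j
  -- dropping `i` may lower the type count of `j`, so PD does not apply; WO does
  · have hiC : i ∈ C := mem_of_mem_erase hi'
    have hCm : 0 < (C.erase m).card := card_pos.2 ⟨i, hi'⟩
    exact (A.wo (C.erase i) (insert a ((C.erase m).erase i)) i j
      (by rw [card_erase_of_mem hiC]; omega)
      (by rw [card_insert_of_notMem (fun h' => haCm (mem_of_mem_erase h')), card_erase_of_mem hi',
        card_erase_of_mem hm] at *; omega)
      (notMem_erase i C) (by simp [hjC]) (by simp [hia]) (by simp [(ha j hjP).ne, hjC])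
      hτij).2 (h.beats i hiC j hjPC)
  · exact key (some j) (notInOpt_some hjaC) (h.beats m hm j hjPC)
      ((tcnt_erase_of_ne τ hτij).ge.trans (tcnt_mono τ (subset_insert a _) _))

lemma replace (h : IsConsistentChoice q ge P C) (ha : ∀ x ∈ P, x < a) (hfull : C.card = q)
    (hm : IsGreatest {x | x ∈ insert a C ∧ LowestIn ge (insert a C) x} m) :
    IsConsistentChoice q ge (insert a P) ((insert a C).erase m) := by
  have haC : a ∉ C := h.notMem_of_forall_lt ha
  have hK : (insert a C).card ≤ q + 1 := by rw [card_insert_of_notMem haC, hfull]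
  obtain ⟨⟨hmK, hmlow⟩, hmax⟩ := hm
  have hlow : ∀ j ∈ (insert a C).erase m,
      ge (((insert a C).erase m).erase j) (some j) (some m) :=
    fun j hj => A.ge_of_lowestIn hK hmK hmlow (mem_of_mem_erase hj) (ne_of_mem_erase hj)
  rcases eq_or_ne m a with rfl | hma
  · rw [erase_insert haC] at hlow ⊢
    exact h.insert_rejected hlow fun hlt => absurd hfull hlt.ne
  have hmC : m ∈ C := (mem_insert.1 hmK).resolve_left hma
  have hτ : τ a ≠ τ m := fun hτ => (ha m (h.subset hmC)).not_ge
    (hmax ⟨mem_insert_self a C,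
      A.lowestIn_of_type_eq hK hmK (mem_insert_self a C) (ha m (h.subset hmC)) hτ hmlow⟩)
  rw [erase_insert_of_ne hma.symm] at hlow ⊢
  exact h.exchange A ha hfull hmC hτ hlow

end IsConsistentChoice

namespace ProfileAxioms

variable {τ : I → T} {q : ℕ} {ge : Finset I → Option I → Option I → Prop}
  (A : ProfileAxioms τ q ge)
include A

open scoped Classical in
lemma isConsistentChoice_buildC (L : List I) (hL : L.Pairwise (· < ·)) {C P : Finset I}
    (hP : ∀ x ∈ P, ∀ b ∈ L, x < b) (h : IsConsistentChoice q ge P C) :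
    IsConsistentChoice q ge (P ∪ L.toFinset) (buildC ge q L C) := by
  induction L generalizing C P with
  | nil => simpa [buildC] using h
  | cons a L ih =>
    obtain ⟨haL, hL⟩ := List.pairwise_cons.1 hL
    have ha : ∀ x ∈ P, x < a := fun x hx => hP x hx a List.mem_cons_self
    have hP' : ∀ x ∈ insert a P, ∀ b ∈ L, x < b := by
      simp only [mem_insert, forall_eq_or_imp]
      exact ⟨haL, fun x hx b hb => hP x hx b (List.mem_cons_of_mem a hb)⟩
    rw [show P ∪ (a :: L).toFinset = insert a P ∪ L.toFinset by ext; simp, buildC]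
    split_ifs with hC hacc
    · exact ih hL hP' (h.insert_accepted A ha hC hacc)
    · exact ih hL hP' (h.insert_skipped A ha hC hacc)
    · have hfull : C.card = q := le_antisymm h.card_le (not_lt.1 hC)
      have haC : a ∉ C := h.notMem_of_forall_lt ha
      exact ih hL hP' (h.replace A ha hfull (A.isGreatest_lowestIn
        (by rw [card_insert_of_notMem haC, hfull]) (mem_insert_self a C)))

lemma isConsistentChoice_cchoice (J : Finset I) : IsConsistentChoice q ge J (Cchoice ge q J) := by
  have h := A.isConsistentChoice_buildC (J.sort (· ≤ ·)) J.sortedLT_sort.pairwise (P := ∅)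
    (by simp) ⟨empty_subset _, by simp, by simp, by simp, by simp⟩
  rwa [empty_union, sort_toFinset] at h

end ProfileAxioms

end SequentialChoice

theorem Cchoice_consistent_general {I : Type*} [LinearOrder I] [DecidableEq I]
    (τ : I → ℕ) (q : ℕ)
    (ge : Finset I → Option I → Option I → Prop)
    (hcomp : CompleteP q ge) (htr : TransP q ge)
    (hPD : PD τ q ge) (hWO : WO τ q ge) (hDC : DC τ q ge)
    (hlab : ∀ J : Finset I, J.card < q → ∀ i j : I, i ∉ J → j ∉ J →
      τ i = τ j → i ≤ j → ge J (some i) (some j)) :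
    ConsistentP q ge (Cchoice ge q) := by
  intro J
  have h := SequentialChoice.ProfileAxioms.isConsistentChoice_cchoice
    ⟨hcomp, htr, hPD, hWO, hDC, hlab⟩ J
  exact ⟨fun i hi => ⟨h.beats i hi, h.accepts i hi⟩, fun hq _ => h.rejects hq⟩

/-- **(Part of Lemma 5.)** If `≿ₛ` satisfies PD, WO and DC (with students labeled first by
type and then by weakly decreasing within-type priority), then the constructed choice
function `Cₛ^≿` is consistent with `≿ₛ`. -/
theorem Cchoice_consistent {I : Type*} [LinearOrder I] [Fintype I] [DecidableEq I]
    (τ : I → ℕ) (q : ℕ)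
    (ge : Finset I → Option I → Option I → Prop)
    (hcomp : CompleteP q ge) (htr : TransP q ge)
    (hPD : PD τ q ge) (hWO : WO τ q ge) (hDC : DC τ q ge)
    (hτmono : ∀ i j : I, τ i < τ j → i < j)
    (hlab : ∀ J : Finset I, J.card < q → ∀ i j : I, i ∉ J → j ∉ J →
      τ i = τ j → i ≤ j → ge J (some i) (some j)) :
    ConsistentP q ge (Cchoice ge q) :=
  Cchoice_consistent_general τ q ge hcomp htr hPD hWO hDC hlab
end
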